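/- Let (u₀,v₀) be a standard pair, V₀ the class of non-decreasing v₀-convex functions, and let F₁, F₂ be cdf's satisfying conditions (a) and (b)'. Then the lower ordering F₁ ≺_{(u₀,v₀)} F₂ holds if and only if ∫_{0}^{1} u₀(F₁⁻¹(α)) dv(α) ≤ ∫_{0}^{1} u₀(F₂⁻¹(α)) dv(α) for all v ∈ V₀. -/

import Mathlib

open MeasureTheory Set Filter Topology Function

noncomputable section

/-- A cumulative distribution function: non-decreasing, right-continuous,
with limit 0 at -∞ and limit 1 at +∞. -/
structure IsCDF (F : ℝ → ℝ) : Prop where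
  mono : Monotone F
  right_cont : ∀ x, ContinuousWithinAt F (Ici x) x
  tendsto_atBot : Tendsto F atBot (𝓝 0)
  tendsto_atTop : Tendsto F atTop (𝓝 1)

/-- The quantile function `F⁻¹ (α) = inf {x | F x ≥ α}`. -/
def qf (F : ℝ → ℝ) (α : ℝ) : ℝ := sInf {x | α ≤ F x}

/-- `(u₀, v₀)` is a standard pair: `u₀ : ℝ → ℝ` non-decreasing left-continuous,
`v₀ : [0,1] → [0,1]` non-decreasing right-continuous with `v₀ 0 = 0` and `v₀ (1⁻) = 1`. -/
structure StandardPair (u₀ v₀ : ℝ → ℝ) : Prop where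
  u_mono : Monotone u₀
  u_left_cont : ∀ x, ContinuousWithinAt u₀ (Iic x) x
  v_mono : MonotoneOn v₀ (Icc 0 1)
  v_right_cont : ∀ α ∈ Ico (0:ℝ) 1, Tendsto v₀ (𝓝[>] α) (𝓝 (v₀ α))
  v_mem : ∀ α ∈ Icc (0:ℝ) 1, v₀ α ∈ Icc (0:ℝ) 1
  v_zero : v₀ 0 = 0
  v_one : Tendsto v₀ (𝓝[<] (1:ℝ)) (𝓝 1)

/-- `μ` is the Lebesgue–Stieltjes measure of the left-continuous integrator `g` on `ℝ`:
`μ [a,b) = g b - g a`. -/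
def IsLSL (g : ℝ → ℝ) (μ : Measure ℝ) : Prop :=
  ∀ a b : ℝ, a ≤ b → μ (Ico a b) = ENNReal.ofReal (g b - g a)

/-- `μ` is the Lebesgue–Stieltjes measure of the right-continuous integrator `g` on `ℝ`:
`μ (a,b] = g b - g a`. -/
def IsLSR (g : ℝ → ℝ) (μ : Measure ℝ) : Prop :=
  ∀ a b : ℝ, a ≤ b → μ (Ioc a b) = ENNReal.ofReal (g b - g a)

/-- `μ` behaves on `[0,1]` as the Lebesgue–Stieltjes measure of the right-continuous
integrator `g`: `μ (a,b] = g b - g a` for `0 ≤ a ≤ b ≤ 1`. -/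
def IsLSR01 (g : ℝ → ℝ) (μ : Measure ℝ) : Prop :=
  ∀ a b : ℝ, 0 ≤ a → a ≤ b → b ≤ 1 → μ (Ioc a b) = ENNReal.ofReal (g b - g a)

/-- `μ` behaves inside `(0,1)` as the Lebesgue–Stieltjes measure of the left-continuous
integrator `g`: `μ [a,b) = g b - g a` for `0 < a ≤ b < 1`. -/
def IsLSL01 (g : ℝ → ℝ) (μ : Measure ℝ) : Prop :=
  ∀ a b : ℝ, 0 < a → a ≤ b → b < 1 → μ (Ico a b) = ENNReal.ofReal (g b - g a)

/-- `u` has density `k` with respect to the Stieltjes measure `μ₀` of `u₀`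
(left-continuous convention `[a,b)`), i.e. `du = k du₀`:
`u b - u a = ∫_{[a,b)} k dμ₀` for all `a ≤ b`. -/
def HasDensity (u k : ℝ → ℝ) (μ₀ : Measure ℝ) : Prop :=
  ∀ a b : ℝ, a ≤ b → u b - u a = ∫ s in Ico a b, k s ∂μ₀

/-- The upper `(u₀,v₀)`-ordering `F₁ ≺^{(u₀,v₀)} F₂`:
`∫ v₀(F₁) du ≥ ∫ v₀(F₂) du` for every non-decreasing `u₀`-concave `u`, where such a `u`
is encoded through its Radon–Nikodym density `k = du/du₀` (bounded, non-negative,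
non-increasing), so that `du = k dμ₀`.  Here `μ₀` is the Stieltjes measure of `u₀`. -/
def UpperOrder (v₀ F₁ F₂ : ℝ → ℝ) (μ₀ : Measure ℝ) : Prop :=
  ∀ k : ℝ → ℝ, Antitone k → (∀ x, 0 ≤ k x) → (∃ C, ∀ x, k x ≤ C) →
    ∫⁻ x, ENNReal.ofReal (v₀ (F₂ x)) ∂(μ₀.withDensity fun x => ENNReal.ofReal (k x)) ≤
      ∫⁻ x, ENNReal.ofReal (v₀ (F₁ x)) ∂(μ₀.withDensity fun x => ENNReal.ofReal (k x))

/-- The lower `(u₀,v₀)`-ordering `F₁ ≺_{(u₀,v₀)} F₂`: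
`-∫ (1 - v₀(F₁)) du ≥ -∫ (1 - v₀(F₂)) du` for every non-decreasing `u₀`-convex `u`,
encoded through its density `m = du/du₀` (non-negative, non-decreasing). -/
def LowerOrder (v₀ F₁ F₂ : ℝ → ℝ) (μ₀ : Measure ℝ) : Prop :=
  ∀ m : ℝ → ℝ, Monotone m → (∀ x, 0 ≤ m x) →
    ∫⁻ x, ENNReal.ofReal (1 - v₀ (F₁ x)) ∂(μ₀.withDensity fun x => ENNReal.ofReal (m x)) ≤
      ∫⁻ x, ENNReal.ofReal (1 - v₀ (F₂ x)) ∂(μ₀.withDensity fun x => ENNReal.ofReal (m x))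

/-- Condition (a): `∫_ℝ |u₀(x)| dv₀(F(x)) < ∞`, where `ν` is the Stieltjes measure
of `v₀ ∘ F`. -/
def CondA (u₀ : ℝ → ℝ) (ν : Measure ℝ) : Prop :=
  ∫⁻ x, ENNReal.ofReal |u₀ x| ∂ν < ⊤

/-- Condition (b): `∫_{[0,p)} v₀(α) du₀(F⁻¹(α)) < ∞` for all `p < 1`, where `lam` is the
Stieltjes measure of `u₀ ∘ F⁻¹` on `(0,1)`. -/
def CondB (v₀ : ℝ → ℝ) (lam : Measure ℝ) : Prop :=
  ∀ p : ℝ, p < 1 → ∫⁻ α in Ioo 0 p, ENNReal.ofReal (v₀ α) ∂lam < ⊤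

/-- Condition (b)': `∫_ℝ (1 - v₀(F(x))) du₀(x) < ∞`, where `μ₀` is the Stieltjes
measure of `u₀`. -/
def CondB' (v₀ F : ℝ → ℝ) (μ₀ : Measure ℝ) : Prop :=
  ∫⁻ x, ENNReal.ofReal (1 - v₀ (F x)) ∂μ₀ < ⊤

/-!
Write `G_F = u₀ ∘ F⁻¹` and let `ρ` be the measure `dv₀` restricted to `(0,1)`, a probability
measure. By the layer-cake formula a non-decreasing density `m` is a superposition of indicators of
upper sets, so the lower ordering only has to be tested on `m = 1_{[t,∞)}`; Fubini on
`{(x, α) | F x < α}` turns `∫_{[t,∞)} (1 - v₀ ∘ F) du₀` into the stop-loss transform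
`∫ (G_F - u₀ t)⁺ dρ`. Dually, the layer-cake formula in `α` reduces (ii)' to the tail inequalities
`∫_S G_{F₁} dρ ≤ ∫_S G_{F₂} dρ` for `S = (β,1)` and `S = [β,1)`. A stop-loss inequality at the
level `c = G_{F₂}(β)`, which is a value of `u₀`, yields the tail inequality on `[β,1)`, and the
open tails follow by continuity; conversely the tail inequality on `{G_{F₁} > c}` yields the
stop-loss inequality at `c`.
-/

open scoped ENNReal

lemma IsUpperSet.monotone_indicator_one {α : Type*} [Preorder α] {s : Set α}
    (hs : IsUpperSet s) : Monotone (s.indicator (1 : α → ℝ)) := fun x y hxy => by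
  by_cases hx : x ∈ s
  · rw [indicator_of_mem hx, indicator_of_mem (hs hxy hx)]
    exact le_rfl
  · rw [indicator_of_notMem hx]
    exact indicator_nonneg (fun _ _ => zero_le_one) y

section UpperSets

variable {α : Type*} [ConditionallyCompleteLinearOrder α]

lemma IsUpperSet.eq_empty_or_univ_or_Ioi_or_Ici {s : Set α} (hs : IsUpperSet s) :
    s = ∅ ∨ s = univ ∨ (∃ a, s = Ioi a) ∨ ∃ a, s = Ici a := by
  rcases s.eq_empty_or_nonempty with rfl | hne
  · exact Or.inl rfl
  by_cases hbdd : BddBelow s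
  · by_cases ha : sInf s ∈ s
    · exact Or.inr <| Or.inr <| Or.inr
        ⟨sInf s, Subset.antisymm (fun x hx => csInf_le hbdd hx) (hs.Ici_subset ha)⟩
    refine Or.inr <| Or.inr <| Or.inl ⟨sInf s, Subset.antisymm
      (fun x hx => (csInf_le hbdd hx).lt_of_ne fun h => ha (h ▸ hx)) fun x hx => ?_⟩
    obtain ⟨y, hy, hyx⟩ := exists_lt_of_csInf_lt hne hx
    exact hs hyx.le hy
  · refine Or.inr <| Or.inl <| eq_univ_of_forall fun x => ?_
    obtain ⟨y, hy, hyx⟩ := not_bddBelow_iff.1 hbdd x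
    exact hs hyx.le hy

lemma IsRelUpperSet.eq_empty_or_Ioi_inter_or_Ici_inter {s : Set α} {a b : α}
    (hs : IsRelUpperSet s (· ∈ Ioo a b)) :
    s = ∅ ∨ (∃ β ∈ Ico a b, s = Ioi β ∩ Ioo a b) ∨ ∃ β ∈ Ioo a b, s = Ici β ∩ Ioo a b := by
  rcases s.eq_empty_or_nonempty with rfl | ⟨x, hx⟩
  · exact Or.inl rfl
  have hbdd : BddBelow s := ⟨a, fun y hy => (hs hy).1.1.le⟩
  by_cases hβ : sInf s ∈ s
  · exact Or.inr <| Or.inr ⟨sInf s, (hs hβ).1, Subset.antisymm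
      (fun y hy => ⟨csInf_le hbdd hy, (hs hy).1⟩) fun y hy => (hs hβ).2 hy.1 hy.2⟩
  refine Or.inr <| Or.inl ⟨sInf s, ⟨le_csInf ⟨x, hx⟩ fun y hy => (hs hy).1.1.le,
    (csInf_le hbdd hx).trans_lt (hs hx).1.2⟩, Subset.antisymm
    (fun y hy => ⟨(csInf_le hbdd hy).lt_of_ne fun h => hβ (h ▸ hy), (hs hy).1⟩) fun y hy => ?_⟩
  obtain ⟨z, hz, hzy⟩ := exists_lt_of_csInf_lt ⟨x, hx⟩ hy.1
  exact (hs hz).2 hzy.le hy.2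

end UpperSets

lemma IsUpperSet.measure_le_of_forall_Ici {ν₁ ν₂ : Measure ℝ}
    (h : ∀ t, ν₁ (Ici t) ≤ ν₂ (Ici t)) {U : Set ℝ} (hU : IsUpperSet U) : ν₁ U ≤ ν₂ U := by
  have hunion : ∀ x : ℕ → ℝ, Antitone x → ν₁ (⋃ n, Ici (x n)) ≤ ν₂ (⋃ n, Ici (x n)) := by
    intro x hx
    have hmono : Monotone fun n => Ici (x n) := fun m n hmn => Ici_subset_Ici.2 (hx hmn)
    rw [hmono.measure_iUnion, hmono.measure_iUnion]
    exact iSup_mono fun n => h (x n)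
  rcases hU.eq_empty_or_univ_or_Ioi_or_Ici with rfl | rfl | ⟨a, rfl⟩ | ⟨a, rfl⟩
  · simp
  · have hcover : ⋃ n : ℕ, Ici (-(n : ℝ)) = univ := eq_univ_of_forall fun x =>
      mem_iUnion.2 <| (exists_nat_ge (-x)).imp fun n hn => neg_le.1 hn
    rw [← hcover]
    exact hunion _ fun m n hmn => neg_le_neg (Nat.cast_le.2 hmn)
  · rw [← iUnion_Ici_eq_Ioi_of_lt_of_tendsto (F := atTop)
      (f := fun n : ℕ => a + 1 / ((n : ℝ) + 1))
      (fun n => lt_add_of_pos_right a (Nat.one_div_pos_of_nat (α := ℝ)))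
      (by simpa using (tendsto_const_nhds (x := a)).add
            (tendsto_one_div_add_atTop_nhds_zero_nat (𝕜 := ℝ)))]
    exact hunion _ fun m n hmn => by gcongr
  · exact h a

lemma lintegral_withDensity_le_of_forall_Ici (μ : Measure ℝ) {W₁ W₂ : ℝ → ℝ≥0∞}
    (hW₁ : Measurable W₁) (hW₂ : Measurable W₂)
    (h : ∀ t, ∫⁻ x in Ici t, W₁ x ∂μ ≤ ∫⁻ x in Ici t, W₂ x ∂μ)
    {m : ℝ → ℝ} (hm : Monotone m) (hm0 : ∀ x, 0 ≤ m x) :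
    ∫⁻ x, W₁ x ∂(μ.withDensity fun x => ENNReal.ofReal (m x)) ≤
      ∫⁻ x, W₂ x ∂(μ.withDensity fun x => ENNReal.ofReal (m x)) := by
  have hm' : Measurable fun x => ENNReal.ofReal (m x) := hm.measurable.ennreal_ofReal
  have layer_cake : ∀ W : ℝ → ℝ≥0∞, Measurable W →
      ∫⁻ x, W x ∂(μ.withDensity fun x => ENNReal.ofReal (m x)) =
        ∫⁻ s in Ioi 0, μ.withDensity W {x | s < m x} := fun W hW => by
    rw [lintegral_withDensity_eq_lintegral_mul _ hm' hW, mul_comm,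
      ← lintegral_withDensity_eq_lintegral_mul _ hW hm',
      lintegral_eq_lintegral_meas_lt _ (ae_of_all _ hm0) hm.measurable.aemeasurable]
  rw [layer_cake W₁ hW₁, layer_cake W₂ hW₂]
  refine lintegral_mono fun s => ((isUpperSet_Ioi s).preimage hm).measure_le_of_forall_Ici
    fun t => ?_
  rw [withDensity_apply _ measurableSet_Ici, withDensity_apply _ measurableSet_Ici]
  exact h t

lemma integral_mul_indicator_one {Ω : Type*} [MeasurableSpace Ω] {μ : Measure Ω} {s : Set Ω}
    (hs : MeasurableSet s) (f : Ω → ℝ) :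
    ∫ x, f x * s.indicator 1 x ∂μ = ∫ x in s, f x ∂μ := by
  rw [← integral_indicator hs]
  congr 1 with x
  by_cases hx : x ∈ s <;> simp [hx]

section FiniteMeasure

variable {Ω : Type*} [MeasurableSpace Ω] {ρ : Measure Ω} [IsFiniteMeasure ρ]

lemma integral_mul_eq_integral_setIntegral_lt {D M : Ω → ℝ} (hD : Integrable D ρ)
    (hM : Measurable M) {B : ℝ} (hM0 : ∀ x, 0 ≤ M x) (hMB : ∀ x, M x ≤ B) :
    ∫ x, D x * M x ∂ρ = ∫ s in Ioo 0 B, ∫ x in {x | s < M x}, D x ∂ρ := by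
  have hA : MeasurableSet {p : ℝ × Ω | p.1 < M p.2} :=
    measurableSet_lt measurable_fst (hM.comp measurable_snd)
  have hint : Integrable (uncurry fun s x => {x | s < M x}.indicator D x)
      ((volume.restrict (Ioo 0 B)).prod ρ) := by
    have : Integrable (fun p : ℝ × Ω => D p.2) ((volume.restrict (Ioo 0 B)).prod ρ) := by
      simpa using (integrable_const (1 : ℝ)).mul_prod hD
    exact this.indicator hA
  have inner : ∀ x, ∫ s in Ioo 0 B, {x | s < M x}.indicator D x = D x * M x := fun x => by
    have : (fun s => {x | s < M x}.indicator D x) = (Iio (M x)).indicator fun _ => D x := by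
      ext s
      by_cases hs : s < M x <;> simp [hs]
    rw [this, integral_indicator_const _ measurableSet_Iio,
      measureReal_restrict_apply measurableSet_Iio, Iio_inter_Ioo, min_eq_left (hMB x),
      Real.volume_real_Ioo_of_le (hM0 x), sub_zero, smul_eq_mul, mul_comm]
  calc ∫ x, D x * M x ∂ρ = ∫ x, (∫ s in Ioo 0 B, {x | s < M x}.indicator D x) ∂ρ := by
        simp_rw [inner]
    _ = ∫ s in Ioo 0 B, ∫ x, {x | s < M x}.indicator D x ∂ρ :=
        (integral_integral_swap hint).symm
    _ = ∫ s in Ioo 0 B, ∫ x in {x | s < M x}, D x ∂ρ := by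
        congr 1 with s
        exact integral_indicator (hM measurableSet_Ioi)

lemma integral_mul_le_integral_mul_of_forall_setIntegral_le {G₁ G₂ M : Ω → ℝ}
    (hG₁ : Integrable G₁ ρ) (hG₂ : Integrable G₂ ρ) (hM : Measurable M) {B : ℝ}
    (hM0 : ∀ x, 0 ≤ M x) (hMB : ∀ x, M x ≤ B)
    (h : ∀ s, ∫ x in {x | s < M x}, G₁ x ∂ρ ≤ ∫ x in {x | s < M x}, G₂ x ∂ρ) :
    ∫ x, G₁ x * M x ∂ρ ≤ ∫ x, G₂ x * M x ∂ρ := by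
  have hbdd : ∀ᵐ x ∂ρ, ‖M x‖ ≤ B :=
    ae_of_all _ fun x => by rw [Real.norm_of_nonneg (hM0 x)]; exact hMB x
  rw [← sub_nonneg, ← integral_sub (hG₂.mul_bdd hM.aestronglyMeasurable hbdd)
    (hG₁.mul_bdd hM.aestronglyMeasurable hbdd)]
  simp_rw [← sub_mul]
  rw [integral_mul_eq_integral_setIntegral_lt (D := fun x => G₂ x - G₁ x) (hG₂.sub hG₁) hM hM0
    hMB]
  refine setIntegral_nonneg measurableSet_Ioo fun s _ => ?_
  rw [integral_sub hG₂.integrableOn hG₁.integrableOn]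
  exact sub_nonneg.2 (h s)

lemma setIntegral_sub_const {G : Ω → ℝ} (hG : Integrable G ρ) (V : Set Ω) (c : ℝ) :
    ∫ x in V, (G x - c) ∂ρ = ∫ x in V, G x ∂ρ - ρ.real V * c := by
  rw [integral_sub hG.integrableOn (integrable_const c), setIntegral_const, smul_eq_mul]

lemma setIntegral_sub_le_integral_max {G : Ω → ℝ} (hG : Integrable G ρ) (V : Set Ω) (c : ℝ) :
    ∫ x in V, (G x - c) ∂ρ ≤ ∫ x, max (G x - c) 0 ∂ρ := by
  have hpos : Integrable (fun x => max (G x - c) 0) ρ := (hG.sub (integrable_const c)).pos_part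
  calc ∫ x in V, (G x - c) ∂ρ ≤ ∫ x in V, max (G x - c) 0 ∂ρ :=
        setIntegral_mono (hG.sub (integrable_const c)).integrableOn hpos.integrableOn
          fun x => le_max_left _ _
    _ ≤ ∫ x, max (G x - c) 0 ∂ρ :=
        setIntegral_le_integral hpos (ae_of_all _ fun x => le_max_right _ _)

lemma integral_max_sub_eq_setIntegral {G : Ω → ℝ} (hG : Integrable G ρ) {V : Set Ω}
    (hV : NullMeasurableSet V ρ) {c : ℝ} (h₁ : ∀ᵐ x ∂ρ, x ∈ V → c ≤ G x)
    (h₂ : ∀ᵐ x ∂ρ, x ∉ V → G x ≤ c) :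
    ∫ x, max (G x - c) 0 ∂ρ = ∫ x in V, (G x - c) ∂ρ := by
  have hpos : Integrable (fun x => max (G x - c) 0) ρ := (hG.sub (integrable_const c)).pos_part
  rw [← integral_add_compl₀ hV hpos,
    setIntegral_congr_ae₀ hV (h₁.mono fun x hx hxV => max_eq_left (sub_nonneg.2 (hx hxV))),
    setIntegral_congr_ae₀ hV.compl
      (h₂.mono fun x hx hxV => max_eq_right (sub_nonpos.2 (hx hxV))),
    integral_zero, add_zero]

lemma setIntegral_le_of_integral_max_le {G₁ G₂ : Ω → ℝ} (hG₁ : Integrable G₁ ρ)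
    (hG₂ : Integrable G₂ ρ) {V : Set Ω} (hV : NullMeasurableSet V ρ) {c : ℝ}
    (h₁ : ∀ᵐ x ∂ρ, x ∈ V → c ≤ G₂ x) (h₂ : ∀ᵐ x ∂ρ, x ∉ V → G₂ x ≤ c)
    (h : ∫ x, max (G₁ x - c) 0 ∂ρ ≤ ∫ x, max (G₂ x - c) 0 ∂ρ) :
    ∫ x in V, G₁ x ∂ρ ≤ ∫ x in V, G₂ x ∂ρ := by
  have := (setIntegral_sub_le_integral_max hG₁ V c).trans
    (h.trans (integral_max_sub_eq_setIntegral hG₂ hV h₁ h₂).le)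
  rwa [setIntegral_sub_const hG₁, setIntegral_sub_const hG₂, sub_le_sub_iff_right] at this

lemma integral_max_le_of_setIntegral_le {G₁ G₂ : Ω → ℝ} (hG₁ : Integrable G₁ ρ)
    (hG₂ : Integrable G₂ ρ) (c : ℝ)
    (h : ∫ x in {x | c < G₁ x}, G₁ x ∂ρ ≤ ∫ x in {x | c < G₁ x}, G₂ x ∂ρ) :
    ∫ x, max (G₁ x - c) 0 ∂ρ ≤ ∫ x, max (G₂ x - c) 0 ∂ρ := by
  rw [integral_max_sub_eq_setIntegral hG₁
    (nullMeasurableSet_lt aemeasurable_const hG₁.aemeasurable)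
    (ae_of_all _ fun x hx => le_of_lt hx) (ae_of_all _ fun x hx => not_lt.1 hx)]
  refine le_trans ?_ (setIntegral_sub_le_integral_max hG₂ {x | c < G₁ x} c)
  rw [setIntegral_sub_const hG₁, setIntegral_sub_const hG₂]
  exact sub_le_sub_right h _

lemma lintegral_ofReal_sub_eq_ofReal_integral_max {G : Ω → ℝ} (hG : Integrable G ρ) (c : ℝ) :
    ∫⁻ x, ENNReal.ofReal (G x - c) ∂ρ = ENNReal.ofReal (∫ x, max (G x - c) 0 ∂ρ) := by
  have hpos : Integrable (fun x => max (G x - c) 0) ρ := (hG.sub (integrable_const c)).pos_part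
  rw [ofReal_integral_eq_lintegral_ofReal hpos (ae_of_all _ fun x => le_max_right _ _)]
  simp [ENNReal.ofReal_max]

end FiniteMeasure

section TailLimits

variable {ρ : Measure ℝ} {f : ℝ → ℝ}

lemma tendsto_setIntegral_Ici_nhdsGT (hf : Integrable f ρ) (a : ℝ) :
    Tendsto (fun b => ∫ x in Ici b, f x ∂ρ) (𝓝[>] a) (𝓝 (∫ x in Ioi a, f x ∂ρ)) := by
  simp_rw [← integral_indicator measurableSet_Ici, ← integral_indicator measurableSet_Ioi]
  refine tendsto_integral_filter_of_dominated_convergence (fun x => ‖f x‖)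
    (Eventually.of_forall fun b => (hf.indicator measurableSet_Ici).aestronglyMeasurable)
    (Eventually.of_forall fun b => ae_of_all _ fun x => norm_indicator_le_norm_self _ _) hf.norm
    (ae_of_all _ fun x => ?_)
  rcases lt_or_ge a x with hax | hxa
  · rw [indicator_of_mem (mem_Ioi.2 hax)]
    refine tendsto_const_nhds.congr' ?_
    filter_upwards [Ioc_mem_nhdsGT hax] with b hb using (indicator_of_mem (mem_Ici.2 hb.2) f).symm
  · rw [indicator_of_notMem (show x ∉ Ioi a from not_lt.2 hxa)]
    refine tendsto_const_nhds.congr' ?_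
    filter_upwards [self_mem_nhdsWithin] with b hb
    exact (indicator_of_notMem (not_le.2 (hxa.trans_lt hb)) f).symm

lemma tendsto_setIntegral_Ioi_nhdsLT (hf : Integrable f ρ) (a : ℝ) :
    Tendsto (fun b => ∫ x in Ioi b, f x ∂ρ) (𝓝[<] a) (𝓝 (∫ x in Ici a, f x ∂ρ)) := by
  simp_rw [← integral_indicator measurableSet_Ici, ← integral_indicator measurableSet_Ioi]
  refine tendsto_integral_filter_of_dominated_convergence (fun x => ‖f x‖)
    (Eventually.of_forall fun b => (hf.indicator measurableSet_Ioi).aestronglyMeasurable)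
    (Eventually.of_forall fun b => ae_of_all _ fun x => norm_indicator_le_norm_self _ _) hf.norm
    (ae_of_all _ fun x => ?_)
  rcases le_or_gt a x with hax | hxa
  · rw [indicator_of_mem (mem_Ici.2 hax)]
    refine tendsto_const_nhds.congr' ?_
    filter_upwards [self_mem_nhdsWithin] with b hb
    exact (indicator_of_mem (mem_Ioi.2 (lt_of_lt_of_le hb hax)) f).symm
  · rw [indicator_of_notMem (show x ∉ Ici a from not_le.2 hxa)]
    refine tendsto_const_nhds.congr' ?_
    filter_upwards [Ico_mem_nhdsLT hxa] with b hb using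
      (indicator_of_notMem (not_lt.2 hb.1) f).symm

end TailLimits

/-- By `IsRelUpperSet.eq_empty_or_Ioi_inter_or_Ici_inter`, the sets `S` are the tails `(β,1)` and
`[β,1)` of the unit interval. -/
def TailIntegralLE (η : Measure ℝ) (G₁ G₂ : ℝ → ℝ) : Prop :=
  ∀ S : Set ℝ, IsRelUpperSet S (· ∈ Ioo (0 : ℝ) 1) → ∫ α in S, G₁ α ∂η ≤ ∫ α in S, G₂ α ∂η

section TailIntegralLE

variable {η : Measure ℝ} {G₁ G₂ : ℝ → ℝ}

lemma tailIntegralLE_of_Ioi_of_Ici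
    (hIoi : ∀ β ∈ Ico (0 : ℝ) 1,
      ∫ α in Ioi β, G₁ α ∂(η.restrict (Ioo 0 1)) ≤ ∫ α in Ioi β, G₂ α ∂(η.restrict (Ioo 0 1)))
    (hIci : ∀ β ∈ Ioo (0 : ℝ) 1,
      ∫ α in Ici β, G₁ α ∂(η.restrict (Ioo 0 1)) ≤ ∫ α in Ici β, G₂ α ∂(η.restrict (Ioo 0 1))) :
    TailIntegralLE η G₁ G₂ := by
  intro S hS
  rcases hS.eq_empty_or_Ioi_inter_or_Ici_inter with rfl | ⟨β, hβ, rfl⟩ | ⟨β, hβ, rfl⟩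
  · simp
  · simpa only [Measure.restrict_restrict' measurableSet_Ioo] using hIoi β hβ
  · simpa only [Measure.restrict_restrict' measurableSet_Ioo] using hIci β hβ

variable (hG₁ : Integrable G₁ (η.restrict (Ioo 0 1)))
  (hG₂ : Integrable G₂ (η.restrict (Ioo 0 1)))
include hG₁ hG₂

lemma tailIntegralLE_of_forall_Ioi
    (h : ∀ β ∈ Ico (0 : ℝ) 1, ∫ α in Ioi β, G₁ α ∂(η.restrict (Ioo 0 1)) ≤
      ∫ α in Ioi β, G₂ α ∂(η.restrict (Ioo 0 1))) :
    TailIntegralLE η G₁ G₂ := by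
  refine tailIntegralLE_of_Ioi_of_Ici h fun β hβ => le_of_tendsto_of_tendsto
    (tendsto_setIntegral_Ioi_nhdsLT hG₁ β) (tendsto_setIntegral_Ioi_nhdsLT hG₂ β) ?_
  filter_upwards [Ioo_mem_nhdsLT hβ.1] with b hb using h b ⟨hb.1.le, hb.2.trans hβ.2⟩

variable [IsFiniteMeasure (η.restrict (Ioo 0 1))]

lemma tailIntegralLE_of_integral_max_le (hmono : MonotoneOn G₂ (Ioo 0 1))
    (h : ∀ β ∈ Ioo (0 : ℝ) 1, ∫ α, max (G₁ α - G₂ β) 0 ∂(η.restrict (Ioo 0 1)) ≤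
      ∫ α, max (G₂ α - G₂ β) 0 ∂(η.restrict (Ioo 0 1))) :
    TailIntegralLE η G₁ G₂ := by
  have hIci : ∀ β ∈ Ioo (0 : ℝ) 1, ∫ α in Ici β, G₁ α ∂(η.restrict (Ioo 0 1)) ≤
      ∫ α in Ici β, G₂ α ∂(η.restrict (Ioo 0 1)) := fun β hβ =>
    setIntegral_le_of_integral_max_le hG₁ hG₂ measurableSet_Ici.nullMeasurableSet
      (ae_restrict_of_forall_mem measurableSet_Ioo fun α hα hβα => hmono hβ hα hβα)
      (ae_restrict_of_forall_mem measurableSet_Ioo fun α hα hβα =>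
        hmono hα hβ (not_le.1 hβα).le) (h β hβ)
  refine tailIntegralLE_of_Ioi_of_Ici (fun β hβ => ?_) hIci
  refine le_of_tendsto_of_tendsto (tendsto_setIntegral_Ici_nhdsGT hG₁ β)
    (tendsto_setIntegral_Ici_nhdsGT hG₂ β) ?_
  filter_upwards [Ioo_mem_nhdsGT hβ.2] with b hb using hIci b ⟨hβ.1.trans_lt hb.1, hb.2⟩

lemma TailIntegralLE.integral_max_le (h : TailIntegralLE η G₁ G₂)
    (hmono : MonotoneOn G₁ (Ioo 0 1)) (c : ℝ) :
    ∫ α, max (G₁ α - c) 0 ∂(η.restrict (Ioo 0 1)) ≤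
      ∫ α, max (G₂ α - c) 0 ∂(η.restrict (Ioo 0 1)) := by
  refine integral_max_le_of_setIntegral_le hG₁ hG₂ c ?_
  rw [Measure.restrict_restrict' measurableSet_Ioo]
  exact h _ fun x hx => ⟨hx.2, fun y hxy hy => ⟨hx.1.trans_le (hmono hx.2 hy hxy), hy⟩⟩

lemma TailIntegralLE.integral_mul_le (h : TailIntegralLE η G₁ G₂) {m : ℝ → ℝ}
    (hm : MonotoneOn m (Icc 0 1)) (hm0 : ∀ t ∈ Icc (0 : ℝ) 1, 0 ≤ m t) :
    ∫ α, G₁ α * m α ∂(η.restrict (Ioo 0 1)) ≤ ∫ α, G₂ α * m α ∂(η.restrict (Ioo 0 1)) := by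
  set M := IccExtend zero_le_one fun x : Icc (0 : ℝ) 1 => m x
  have hM : Monotone M := (monotoneOn_iff_monotone.1 hm).IccExtend _
  have hMm : ∀ G : ℝ → ℝ, ∫ α, G α * m α ∂(η.restrict (Ioo 0 1)) =
      ∫ α, G α * M α ∂(η.restrict (Ioo 0 1)) := fun G =>
    setIntegral_congr_fun measurableSet_Ioo fun α hα => by
      rw [show M α = m α from IccExtend_of_mem _ _ (Ioo_subset_Icc_self hα)]
  rw [hMm, hMm]
  have hproj : ∀ x, (projIcc (0 : ℝ) 1 zero_le_one x : ℝ) ∈ Icc (0 : ℝ) 1 := fun x =>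
    (projIcc (0 : ℝ) 1 zero_le_one x).2
  refine integral_mul_le_integral_mul_of_forall_setIntegral_le hG₁ hG₂ hM.measurable
    (fun x => hm0 _ (hproj x)) (fun x => hm (hproj x) ⟨zero_le_one, le_rfl⟩ (hproj x).2)
    fun s => ?_
  rw [Measure.restrict_restrict' measurableSet_Ioo]
  exact h _ (((isUpperSet_Ioi s).preimage hM).isRelUpperSet_sep _)

end TailIntegralLE

namespace IsCDF

variable {F : ℝ → ℝ} (hF : IsCDF F)
include hF

lemma mem_Icc (x : ℝ) : F x ∈ Icc (0 : ℝ) 1 :=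
  ⟨le_of_tendsto hF.tendsto_atBot (eventually_atBot.2 ⟨x, fun _ hy => hF.mono hy⟩),
    ge_of_tendsto hF.tendsto_atTop (eventually_atTop.2 ⟨x, fun _ hy => hF.mono hy⟩)⟩

lemma nonempty_setOf_le {α : ℝ} (hα : α < 1) : {x | α ≤ F x}.Nonempty :=
  ((hF.tendsto_atTop.eventually (eventually_gt_nhds hα)).exists).imp fun _ hx => hx.le

lemma bddBelow_setOf_le {α : ℝ} (hα : 0 < α) : BddBelow {x | α ≤ F x} := by
  obtain ⟨z, hz⟩ := (hF.tendsto_atBot.eventually (eventually_lt_nhds hα)).exists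
  exact ⟨z, fun y hy => le_of_not_gt fun hyz => ((hF.mono hyz.le).trans_lt hz).not_ge hy⟩

lemma le_apply_qf {α : ℝ} (hα : α ∈ Ioo (0 : ℝ) 1) : α ≤ F (qf F α) := by
  refine ge_of_tendsto ((hF.right_cont _).mono_left (nhdsWithin_mono _ Ioi_subset_Ici_self))
    (eventually_nhdsWithin_of_forall fun y hy => ?_)
  obtain ⟨x, hx, hxy⟩ := exists_lt_of_csInf_lt (hF.nonempty_setOf_le hα.2) hy
  exact hx.trans (hF.mono hxy.le)

lemma qf_le_iff {α x : ℝ} (hα : α ∈ Ioo (0 : ℝ) 1) : qf F α ≤ x ↔ α ≤ F x :=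
  ⟨fun h => (hF.le_apply_qf hα).trans (hF.mono h),
    fun h => csInf_le (hF.bddBelow_setOf_le hα.1) h⟩

lemma qf_monotoneOn : MonotoneOn (qf F) (Ioo 0 1) := fun _ ha _ hb hab =>
  csInf_le_csInf (hF.bddBelow_setOf_le ha.1) (hF.nonempty_setOf_le hb.2) fun _ hx => hab.trans hx

end IsCDF

lemma IsLSL.isLocallyFiniteMeasure {g : ℝ → ℝ} {μ : Measure ℝ} (h : IsLSL g μ) :
    IsLocallyFiniteMeasure μ :=
  ⟨fun x => ⟨Ico (x - 1) (x + 1), Ico_mem_nhds (by linarith) (by linarith), by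
    rw [h _ _ (by linarith)]; exact ENNReal.ofReal_lt_top⟩⟩

/-- Fubini on `{(x, α) | F x < α}`, whose `α`-sections are `(-∞, F⁻¹ α)` by `IsCDF.qf_le_iff`. -/
lemma lintegral_Ici_measure_Ioi_eq_lintegral_qf {u₀ F : ℝ → ℝ} {μ₀ : Measure ℝ} [SFinite μ₀]
    (hu : Monotone u₀) (hμ₀ : IsLSL u₀ μ₀) (hF : IsCDF F) (ν : Measure ℝ)
    [SFinite (ν.restrict (Ioo 0 1))] (t : ℝ) :
    ∫⁻ x in Ici t, ν.restrict (Ioo 0 1) (Ioi (F x)) ∂μ₀ =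
      ∫⁻ α in Ioo 0 1, ENNReal.ofReal (u₀ (qf F α) - u₀ t) ∂ν := by
  have hA : MeasurableSet {p : ℝ × ℝ | F p.1 < p.2} :=
    measurableSet_lt (hF.mono.measurable.comp measurable_fst) measurable_snd
  calc ∫⁻ x in Ici t, ν.restrict (Ioo 0 1) (Ioi (F x)) ∂μ₀
      = (μ₀.restrict (Ici t)).prod (ν.restrict (Ioo 0 1)) {p | F p.1 < p.2} :=
        (Measure.prod_apply hA).symm
    _ = ∫⁻ α in Ioo 0 1, μ₀.restrict (Ici t) {x | F x < α} ∂ν := Measure.prod_apply_symm hA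
    _ = ∫⁻ α in Ioo 0 1, ENNReal.ofReal (u₀ (qf F α) - u₀ t) ∂ν := by
      refine setLIntegral_congr_fun measurableSet_Ioo fun α hα => ?_
      have hIio : {x | F x < α} = Iio (qf F α) := by
        ext x
        simp [← not_le, hF.qf_le_iff hα]
      rw [hIio, Measure.restrict_apply measurableSet_Iio, Iio_inter_Ici]
      rcases le_or_gt t (qf F α) with h | h
      · exact hμ₀ _ _ h
      · rw [Ico_eq_empty (not_lt.2 h.le), measure_empty, eq_comm, ENNReal.ofReal_eq_zero,
          sub_nonpos]
        exact hu h.le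

namespace StandardPair

variable {u₀ v₀ : ℝ → ℝ} (hp : StandardPair u₀ v₀)
include hp

lemma v_one_eq : v₀ 1 = 1 := by
  refine le_antisymm (hp.v_mem 1 ⟨zero_le_one, le_rfl⟩).2 (le_of_tendsto hp.v_one ?_)
  filter_upwards [Ioo_mem_nhdsLT zero_lt_one] with a ha
  exact hp.v_mono ⟨ha.1.le, ha.2.le⟩ ⟨zero_le_one, le_rfl⟩ ha.2.le

lemma monotone_comp {F : ℝ → ℝ} (hF : IsCDF F) : Monotone fun x => v₀ (F x) :=
  fun _ _ h => hp.v_mono (hF.mem_Icc _) (hF.mem_Icc _) (hF.mono h)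

lemma lowerOrder_iff_forall_Ici {F₁ F₂ : ℝ → ℝ} (hF₁ : IsCDF F₁) (hF₂ : IsCDF F₂)
    (μ₀ : Measure ℝ) :
    LowerOrder v₀ F₁ F₂ μ₀ ↔ ∀ t, ∫⁻ x in Ici t, ENNReal.ofReal (1 - v₀ (F₁ x)) ∂μ₀ ≤
      ∫⁻ x in Ici t, ENNReal.ofReal (1 - v₀ (F₂ x)) ∂μ₀ := by
  have hW : ∀ {F}, IsCDF F → Measurable fun x => ENNReal.ofReal (1 - v₀ (F x)) := fun hF =>
    (measurable_const.sub (hp.monotone_comp hF).measurable).ennreal_ofReal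
  refine ⟨fun h t => ?_, fun h m hm hm0 =>
    lintegral_withDensity_le_of_forall_Ici μ₀ (hW hF₁) (hW hF₂) h hm hm0⟩
  have hind : (fun x => ENNReal.ofReal ((Ici t).indicator 1 x)) = (Ici t).indicator 1 := by
    ext x
    by_cases hx : t ≤ x <;> simp [hx]
  have := h _ (isUpperSet_Ici t).monotone_indicator_one
    (indicator_nonneg fun _ _ => zero_le_one)
  rwa [hind, withDensity_indicator_one measurableSet_Ici] at this

variable {η : Measure ℝ} (hη : IsLSR01 v₀ η)
include hη

lemma measure_singleton_one : η {1} = 0 := by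
  have hlim : Tendsto (fun a => ENNReal.ofReal (1 - v₀ a)) (𝓝[<] 1) (𝓝 0) := by
    simpa [Function.comp_def] using (ENNReal.continuous_ofReal.tendsto _).comp
      ((tendsto_const_nhds (x := (1 : ℝ))).sub hp.v_one)
  refine le_antisymm (ge_of_tendsto hlim ?_) bot_le
  filter_upwards [Ioo_mem_nhdsLT zero_lt_one] with a ha
  calc η {1} ≤ η (Ioc a 1) := measure_mono (singleton_subset_iff.2 ⟨ha.2, le_rfl⟩)
    _ = ENNReal.ofReal (1 - v₀ a) := by rw [hη a 1 ha.1.le ha.2.le le_rfl, hp.v_one_eq]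

lemma measure_Ioo_one {c : ℝ} (hc : c ∈ Icc (0 : ℝ) 1) :
    η (Ioo c 1) = ENNReal.ofReal (1 - v₀ c) := by
  rw [← Ioc_sdiff_right, measure_sdiff_null (hp.measure_singleton_one hη),
    hη c 1 hc.1 hc.2 le_rfl, hp.v_one_eq]

lemma restrict_Ioo_measure_Ioi {c : ℝ} (hc : c ∈ Icc (0 : ℝ) 1) :
    η.restrict (Ioo 0 1) (Ioi c) = ENNReal.ofReal (1 - v₀ c) := by
  rw [Measure.restrict_apply measurableSet_Ioi, ← hp.measure_Ioo_one hη hc]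
  congr 1
  ext x
  simp only [mem_inter_iff, mem_Ioi, mem_Ioo]
  exact ⟨fun h => ⟨h.1, h.2.2⟩, fun h => ⟨h.1, hc.1.trans_lt h.1, h.2⟩⟩

lemma isProbabilityMeasure_restrict_Ioo : IsProbabilityMeasure (η.restrict (Ioo 0 1)) :=
  ⟨by rw [Measure.restrict_apply_univ, hp.measure_Ioo_one hη ⟨le_rfl, zero_le_one⟩, hp.v_zero,
    sub_zero, ENNReal.ofReal_one]⟩

lemma restrict_Ioc_eq_restrict_Ioo : η.restrict (Ioc 0 1) = η.restrict (Ioo 0 1) :=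
  Measure.restrict_congr_set <| by
    rw [← Ioc_sdiff_right]; exact (sdiff_null_ae_eq_self (hp.measure_singleton_one hη)).symm

lemma map_qf_restrict_Ioo {F : ℝ → ℝ} (hF : IsCDF F) {ν : Measure ℝ}
    (hν : IsLSR (fun x => v₀ (F x)) ν) : (η.restrict (Ioo 0 1)).map (qf F) = ν := by
  have := hp.isProbabilityMeasure_restrict_Ioo hη
  have hqf := aemeasurable_restrict_of_monotoneOn (μ := η) measurableSet_Ioo hF.qf_monotoneOn
  refine Measure.ext_of_Ioc _ _ fun a b hab => ?_
  have hpre : qf F ⁻¹' Ioc a b ∩ Ioo 0 1 = Ioc (F a) (F b) ∩ Ioo 0 1 := by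
    ext α
    by_cases hα : α ∈ Ioo (0 : ℝ) 1
    · simp [hα, hF.qf_le_iff hα, ← not_le]
    · simp [hα]
  rw [Measure.map_apply_of_aemeasurable hqf measurableSet_Ioc,
    Measure.restrict_apply' measurableSet_Ioo, hpre, ← Measure.restrict_apply' measurableSet_Ioo,
    ← Ioi_sdiff_Ioi, measure_sdiff (Ioi_subset_Ioi (hF.mono hab.le))
      measurableSet_Ioi.nullMeasurableSet (measure_ne_top _ _),
    hp.restrict_Ioo_measure_Ioi hη (hF.mem_Icc a), hp.restrict_Ioo_measure_Ioi hη (hF.mem_Icc b),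
    hν a b hab.le, ← ENNReal.ofReal_sub _ (sub_nonneg.2 (hp.v_mem _ (hF.mem_Icc b)).2)]
  congr 1
  ring

lemma integrable_comp_qf {F : ℝ → ℝ} (hF : IsCDF F) {ν : Measure ℝ}
    (hν : IsLSR (fun x => v₀ (F x)) ν) (ha : CondA u₀ ν) :
    Integrable (fun α => u₀ (qf F α)) (η.restrict (Ioo 0 1)) := by
  have hu : Measurable u₀ := hp.u_mono.measurable
  refine (integrable_map_measure hu.aestronglyMeasurable
    (aemeasurable_restrict_of_monotoneOn measurableSet_Ioo hF.qf_monotoneOn)).1 ?_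
  rw [hp.map_qf_restrict_Ioo hη hF hν]
  exact ⟨hu.aestronglyMeasurable,
    by simpa [HasFiniteIntegral, Real.enorm_eq_ofReal_abs, CondA] using ha⟩

lemma lintegral_Ici_eq_ofReal_integral_max {μ₀ : Measure ℝ} [SFinite μ₀] (hμ₀ : IsLSL u₀ μ₀)
    {F : ℝ → ℝ} (hF : IsCDF F) (hG : Integrable (fun α => u₀ (qf F α)) (η.restrict (Ioo 0 1)))
    (t : ℝ) :
    ∫⁻ x in Ici t, ENNReal.ofReal (1 - v₀ (F x)) ∂μ₀ =
      ENNReal.ofReal (∫ α, max (u₀ (qf F α) - u₀ t) 0 ∂(η.restrict (Ioo 0 1))) := by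
  have := hp.isProbabilityMeasure_restrict_Ioo hη
  rw [← lintegral_ofReal_sub_eq_ofReal_integral_max hG,
    ← lintegral_Ici_measure_Ioi_eq_lintegral_qf hp.u_mono hμ₀ hF η t]
  exact lintegral_congr fun x => (hp.restrict_Ioo_measure_Ioi hη (hF.mem_Icc x)).symm

lemma lintegral_Ici_le_iff_integral_max_le {μ₀ : Measure ℝ} [SFinite μ₀] (hμ₀ : IsLSL u₀ μ₀)
    {F₁ F₂ : ℝ → ℝ} (hF₁ : IsCDF F₁) (hF₂ : IsCDF F₂)
    (hG₁ : Integrable (fun α => u₀ (qf F₁ α)) (η.restrict (Ioo 0 1)))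
    (hG₂ : Integrable (fun α => u₀ (qf F₂ α)) (η.restrict (Ioo 0 1))) (t : ℝ) :
    ∫⁻ x in Ici t, ENNReal.ofReal (1 - v₀ (F₁ x)) ∂μ₀ ≤
        ∫⁻ x in Ici t, ENNReal.ofReal (1 - v₀ (F₂ x)) ∂μ₀ ↔
      ∫ α, max (u₀ (qf F₁ α) - u₀ t) 0 ∂(η.restrict (Ioo 0 1)) ≤
        ∫ α, max (u₀ (qf F₂ α) - u₀ t) 0 ∂(η.restrict (Ioo 0 1)) := by
  rw [hp.lintegral_Ici_eq_ofReal_integral_max hη hμ₀ hF₁ hG₁,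
    hp.lintegral_Ici_eq_ofReal_integral_max hη hμ₀ hF₂ hG₂]
  exact ENNReal.ofReal_le_ofReal_iff (integral_nonneg fun _ => le_max_right _ _)

lemma setIntegral_indicator_Ioi_mem_Icc (β : ℝ) :
    ∀ α ∈ Icc (0 : ℝ) 1, ∫ t in Ioc 0 α, (Ioi β).indicator 1 t ∂η ∈ Icc (0 : ℝ) 1 := by
  intro α hα
  have hIoc : η (Ioc 0 α) = ENNReal.ofReal (v₀ α) := by
    rw [hη 0 α le_rfl hα.1 hα.2, hp.v_zero, sub_zero]
  rw [integral_indicator_one measurableSet_Ioi]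
  refine ⟨measureReal_nonneg, ?_⟩
  calc (η.restrict (Ioc 0 α)).real (Ioi β) ≤ (η.restrict (Ioc 0 α)).real univ :=
        measureReal_mono (subset_univ _) (by simp [hIoc])
    _ = v₀ α := by
        rw [measureReal_restrict_apply_univ, measureReal_def, hIoc,
          ENNReal.toReal_ofReal (hp.v_mem α hα).1]
    _ ≤ 1 := (hp.v_mem α hα).2

end StandardPair

theorem theorem2_i_iff_ii_general
    (u₀ v₀ F₁ F₂ : ℝ → ℝ) (hpair : StandardPair u₀ v₀)
    (hF₁ : IsCDF F₁) (hF₂ : IsCDF F₂)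
    (μ₀ : Measure ℝ) (hμ₀ : IsLSL u₀ μ₀)
    (η : Measure ℝ) (hη : IsLSR01 v₀ η)
    (ν₁ ν₂ : Measure ℝ)
    (hν₁ : IsLSR (fun x => v₀ (F₁ x)) ν₁) (hν₂ : IsLSR (fun x => v₀ (F₂ x)) ν₂)
    (ha₁ : CondA u₀ ν₁) (ha₂ : CondA u₀ ν₂) :
    LowerOrder v₀ F₁ F₂ μ₀ ↔
    (∀ v mtilde : ℝ → ℝ,
      MonotoneOn mtilde (Icc 0 1) → (∀ t ∈ Icc (0:ℝ) 1, 0 ≤ mtilde t) →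
      (∀ α ∈ Icc (0:ℝ) 1, v α = ∫ t in Ioc 0 α, mtilde t ∂η) →
      (∀ α ∈ Icc (0:ℝ) 1, v α ∈ Icc (0:ℝ) 1) →
      ∫ α in Ioc 0 1, u₀ (qf F₁ α) * mtilde α ∂η ≤
        ∫ α in Ioc 0 1, u₀ (qf F₂ α) * mtilde α ∂η) := by
  have := hpair.isProbabilityMeasure_restrict_Ioo hη
  have := hμ₀.isLocallyFiniteMeasure
  have hG₁ := hpair.integrable_comp_qf hη hF₁ hν₁ ha₁
  have hG₂ := hpair.integrable_comp_qf hη hF₂ hν₂ ha₂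
  have hmono : ∀ {F}, IsCDF F → MonotoneOn (fun α => u₀ (qf F α)) (Ioo 0 1) :=
    fun hF => hpair.u_mono.comp_monotoneOn hF.qf_monotoneOn
  rw [hpair.lowerOrder_iff_forall_Ici hF₁ hF₂,
    forall_congr' (hpair.lintegral_Ici_le_iff_integral_max_le hη hμ₀ hF₁ hF₂ hG₁ hG₂),
    hpair.restrict_Ioc_eq_restrict_Ioo hη]
  constructor
  · intro h v mtilde hmt hmt0 _ _
    exact (tailIntegralLE_of_integral_max_le hG₁ hG₂ (hmono hF₂)
      fun β _ => h (qf F₂ β)).integral_mul_le hG₁ hG₂ hmt hmt0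
  · intro h t
    refine (tailIntegralLE_of_forall_Ioi hG₁ hG₂ fun β _ => ?_).integral_max_le hG₁ hG₂
      (hmono hF₁) (u₀ t)
    have := h _ _ ((isUpperSet_Ioi β).monotone_indicator_one.monotoneOn _)
      (fun _ _ => indicator_nonneg (fun _ _ => zero_le_one) _) (fun _ _ => rfl)
      (hpair.setIntegral_indicator_Ioi_mem_Icc hη β)
    rwa [integral_mul_indicator_one measurableSet_Ioi,
      integral_mul_indicator_one measurableSet_Ioi] at this

/-- **Theorem 2, (i)' ↔ (ii)'.**  Let `(u₀,v₀)` be a standard pair and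
`F₁, F₂` cdf's satisfying conditions (a) and (b)'.  Then `F₁ ≺_{(u₀,v₀)} F₂` (the lower
ordering) iff `∫_0^1 u₀(F₁⁻¹(α)) dv(α) ≤ ∫_0^1 u₀(F₂⁻¹(α)) dv(α)` for all `v ∈ V₀`,
i.e. all non-decreasing `v₀`-convex `v : [0,1] → [0,1]`, given by a non-negative
non-decreasing density `m̃` with respect to `dv₀`, so that `dv = m̃ dη`. -/
theorem theorem2_i_iff_ii
    (u₀ v₀ F₁ F₂ : ℝ → ℝ) (hpair : StandardPair u₀ v₀)
    (hF₁ : IsCDF F₁) (hF₂ : IsCDF F₂)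
    (μ₀ : Measure ℝ) (hμ₀ : IsLSL u₀ μ₀)
    (η : Measure ℝ) (hη : IsLSR01 v₀ η)
    (ν₁ ν₂ : Measure ℝ)
    (hν₁ : IsLSR (fun x => v₀ (F₁ x)) ν₁) (hν₂ : IsLSR (fun x => v₀ (F₂ x)) ν₂)
    (ha₁ : CondA u₀ ν₁) (ha₂ : CondA u₀ ν₂)
    (hb'₁ : CondB' v₀ F₁ μ₀) (hb'₂ : CondB' v₀ F₂ μ₀) :
    LowerOrder v₀ F₁ F₂ μ₀ ↔
    (∀ v mtilde : ℝ → ℝ,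
      MonotoneOn mtilde (Icc 0 1) → (∀ t ∈ Icc (0:ℝ) 1, 0 ≤ mtilde t) →
      (∀ α ∈ Icc (0:ℝ) 1, v α = ∫ t in Ioc 0 α, mtilde t ∂η) →
      (∀ α ∈ Icc (0:ℝ) 1, v α ∈ Icc (0:ℝ) 1) →
      ∫ α in Ioc 0 1, u₀ (qf F₁ α) * mtilde α ∂η ≤
        ∫ α in Ioc 0 1, u₀ (qf F₂ α) * mtilde α ∂η) :=
  theorem2_i_iff_ii_general u₀ v₀ F₁ F₂ hpair hF₁ hF₂ μ₀ hμ₀ η hη ν₁ ν₂ hν₁ hν₂ ha₁ ha₂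

end
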